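/- The class of languages accepted by repetitive nondeterministic finite automata with translucent words (RNFAwtws) is closed under union: if L₁ and L₂ are languages over the same finite alphabet Σ, each accepted by an RNFAwtw, then L₁ ∪ L₂ is accepted by an RNFAwtw. -/

import Mathlib

/-! Repetitive (non)deterministic finite automata with translucent words. -/

/-- Behavior of the automaton at the end-of-tape marker: halt accepting,
halt rejecting, or (in the repetitive case) continue in one of a set of states. -/
inductive EndBehavior (Q : Type) : Type where
  | accept : EndBehavior Q
  | reject : EndBehavior Q
  | cont : Set Q → EndBehavior Q

/-- `InStar S w` means `w` belongs to the Kleene star `S*` of the set of words `S`. -/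
def InStar {α : Type} (S : Set (List α)) (w : List α) : Prop :=
  ∃ l : List (List α), (∀ u ∈ l, u ∈ S) ∧ l.flatten = w

/-- A (repetitive) nondeterministic finite automaton with translucent words,
with state set `Q` over the alphabet `α`.  `tl q` is the set `τ(q)` of
translucent words of the state `q`, `delta` is the transition function and
`endB q` is the behavior at the end-of-tape marker.  The fields `tl_fin`,
`code_ne`, `prefix_code` and `tl_head` express that each `τ(q)` is finite,
that `τ(q) ∪ Σ_q` is a prefix code (no empty word, and no member is a proper
prefix of another member), and that no word of `τ(q)` begins with a letter
readable in `q`. -/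
structure RNFAwtw (α : Type) (Q : Type) : Type where
  init : Set Q
  tl : Q → Set (List α)
  delta : Q → α → Set Q
  endB : Q → EndBehavior Q
  tl_fin : ∀ q, (tl q).Finite
  code_ne : ∀ q, [] ∉ tl q
  prefix_code : ∀ q,
    ∀ u ∈ tl q ∪ {w | ∃ a, (delta q a).Nonempty ∧ w = [a]},
    ∀ v ∈ tl q ∪ {w | ∃ a, (delta q a).Nonempty ∧ w = [a]},
      u <+: v → u = v
  tl_head : ∀ q, ∀ t ∈ tl q, ∀ a, (delta q a).Nonempty → ¬ [a] <+: t

/-- Configurations: a pair of a state and the remaining tape content, or one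
of the two halting configurations. -/
inductive Conf (α Q : Type) : Type where
  | state : Q → List α → Conf α Q
  | accept : Conf α Q
  | reject : Conf α Q

/-- The single-step computation relation of an RNFAwtw. -/
inductive RNFAwtw.Step {α Q : Type} (A : RNFAwtw α Q) :
    Conf α Q → Conf α Q → Prop where
  | read {q q' : Q} {a : α} {u v : List α} :
      InStar (A.tl q) u → q' ∈ A.delta q a →
      RNFAwtw.Step A (Conf.state q (u ++ a :: v)) (Conf.state q' (u ++ v))
  | stuck {q : Q} {a : α} {u v : List α} :
      InStar (A.tl q) u → A.delta q a = ∅ →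
      (∀ t ∈ A.tl q, ¬ t <+: (a :: v)) →
      RNFAwtw.Step A (Conf.state q (u ++ a :: v)) Conf.reject
  | haltAccept {q : Q} {w : List α} :
      InStar (A.tl q) w → A.endB q = EndBehavior.accept →
      RNFAwtw.Step A (Conf.state q w) Conf.accept
  | haltReject {q : Q} {w : List α} :
      InStar (A.tl q) w → A.endB q = EndBehavior.reject →
      RNFAwtw.Step A (Conf.state q w) Conf.reject
  | goOn {q q' : Q} {w : List α} {S : Set Q} :
      InStar (A.tl q) w → A.endB q = EndBehavior.cont S → q' ∈ S →
      RNFAwtw.Step A (Conf.state q w) (Conf.state q' w)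

/-- `A` accepts the word `w`. -/
def RNFAwtw.Accepts {α Q : Type} (A : RNFAwtw α Q) (w : List α) : Prop :=
  ∃ q0 ∈ A.init, Relation.ReflTransGen A.Step (Conf.state q0 w) Conf.accept

/-- The language accepted by `A`. -/
def RNFAwtw.lang {α Q : Type} (A : RNFAwtw α Q) : Set (List α) :=
  { w | A.Accepts w }

/-- `A` is deterministic: one initial state, at most one transition per
state/letter pair, and at the end-of-tape marker the continuation (if any)
is a single state. -/
def RNFAwtw.Deterministic {α Q : Type} (A : RNFAwtw α Q) : Prop :=
  (∃ q0, A.init = {q0}) ∧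
  (∀ q a, (A.delta q a).Subsingleton) ∧
  (∀ q S, A.endB q = EndBehavior.cont S → ∃ q', S = {q'})

/-- `A` is non-repetitive: at the end-of-tape marker it always halts. -/
def RNFAwtw.NonRepetitive {α Q : Type} (A : RNFAwtw α Q) : Prop :=
  ∀ q S, A.endB q ≠ EndBehavior.cont S

/-- `L` is accepted by some repetitive NFAwtw (with a finite state set). -/
def AcceptedByRNFAwtw {α : Type} (L : Set (List α)) : Prop :=
  ∃ (Q : Type) (_ : Finite Q) (A : RNFAwtw α Q), A.lang = L

/-- `L` is accepted by some repetitive DFAwtw. -/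
def AcceptedByRDFAwtw {α : Type} (L : Set (List α)) : Prop :=
  ∃ (Q : Type) (_ : Finite Q) (A : RNFAwtw α Q), A.Deterministic ∧ A.lang = L

/-- `L` is accepted by some (non-repetitive) NFAwtw. -/
def AcceptedByNFAwtw {α : Type} (L : Set (List α)) : Prop :=
  ∃ (Q : Type) (_ : Finite Q) (A : RNFAwtw α Q), A.NonRepetitive ∧ A.lang = L

/-- `L` is accepted by some (non-repetitive) DFAwtw. -/
def AcceptedByDFAwtw {α : Type} (L : Set (List α)) : Prop :=
  ∃ (Q : Type) (_ : Finite Q) (A : RNFAwtw α Q),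
    A.NonRepetitive ∧ A.Deterministic ∧ A.lang = L

/-- The two-letter alphabet `{a, b}`. -/
inductive Letter : Type where
  | a : Letter
  | b : Letter
deriving DecidableEq

instance : Fintype Letter :=
  ⟨{Letter.a, Letter.b}, fun x => by cases x <;> simp⟩

/-! The disjoint union of the two automata accepts `L₁ ∪ L₂`. No step leaves a component of
the union, and each component is a copy of one of the given automata, so a computation of
the union started in a state of one component is, state by state, a computation of that
automaton. -/

variable {α Q Q' : Type}

def EndBehavior.map (f : Q → Q') : EndBehavior Q → EndBehavior Q'
  | .accept => .accept
  | .reject => .reject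
  | .cont S => .cont (f '' S)

def Conf.map (f : Q → Q') : Conf α Q → Conf α Q'
  | .state q w => .state (f q) w
  | .accept => .accept
  | .reject => .reject

namespace RNFAwtw

structure IsCopy (f : Q → Q') (A : RNFAwtw α Q) (B : RNFAwtw α Q') : Prop where
  tl_eq : ∀ q, B.tl (f q) = A.tl q
  delta_eq : ∀ q a, B.delta (f q) a = f '' A.delta q a
  endB_eq : ∀ q, B.endB (f q) = (A.endB q).map f

namespace IsCopy

variable {f : Q → Q'} {A : RNFAwtw α Q} {B : RNFAwtw α Q'}

theorem step_map (hf : IsCopy f A B) {c c' : Conf α Q} (h : A.Step c c') :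
    B.Step (c.map f) (c'.map f) := by
  cases h with
  | @read q _ _ _ _ hu hq =>
    exact .read (hf.tl_eq q ▸ hu) (hf.delta_eq q _ ▸ Set.mem_image_of_mem f hq)
  | @stuck q _ _ _ hu hd ht =>
    refine .stuck (hf.tl_eq q ▸ hu) ?_ (hf.tl_eq q ▸ ht)
    rw [hf.delta_eq, hd, Set.image_empty]
  | @haltAccept q _ hw he =>
    exact .haltAccept (hf.tl_eq q ▸ hw) (by rw [hf.endB_eq, he, EndBehavior.map])
  | @haltReject q _ hw he =>
    exact .haltReject (hf.tl_eq q ▸ hw) (by rw [hf.endB_eq, he, EndBehavior.map])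
  | @goOn q _ _ _ hw he hq =>
    exact .goOn (hf.tl_eq q ▸ hw) (by rw [hf.endB_eq, he, EndBehavior.map])
      (Set.mem_image_of_mem f hq)

theorem exists_step_of_step_map (hf : IsCopy f A B) {c : Conf α Q} {d : Conf α Q'}
    (h : B.Step (c.map f) d) : ∃ c', d = c'.map f ∧ A.Step c c' := by
  rcases c with ⟨q, w⟩ | _ | _
  all_goals simp only [Conf.map] at h
  case accept | reject => cases h
  have htl := hf.tl_eq q
  have hend := hf.endB_eq q
  cases h with
  | @read _ _ _ u v hu hq =>
    rw [hf.delta_eq] at hq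
    obtain ⟨q', hq', rfl⟩ := hq
    exact ⟨.state q' (u ++ v), rfl, .read (htl ▸ hu) hq'⟩
  | stuck hu hd ht =>
    rw [hf.delta_eq, Set.image_eq_empty] at hd
    exact ⟨.reject, rfl, .stuck (htl ▸ hu) hd (htl ▸ ht)⟩
  | haltAccept hw he =>
    rw [he] at hend
    cases hA : A.endB q <;> rw [hA, EndBehavior.map] at hend <;> cases hend
    exact ⟨.accept, rfl, .haltAccept (htl ▸ hw) hA⟩
  | haltReject hw he =>
    rw [he] at hend
    cases hA : A.endB q <;> rw [hA, EndBehavior.map] at hend <;> cases hend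
    exact ⟨.reject, rfl, .haltReject (htl ▸ hw) hA⟩
  | goOn hw he hq =>
    rw [he] at hend
    cases hA : A.endB q <;> rw [hA, EndBehavior.map] at hend <;> cases hend
    obtain ⟨q', hq', rfl⟩ := hq
    exact ⟨.state q' w, rfl, .goOn (htl ▸ hw) hA hq'⟩

theorem reflTransGen_map_accept_iff (hf : IsCopy f A B) (c : Conf α Q) :
    Relation.ReflTransGen B.Step (c.map f) .accept ↔
      Relation.ReflTransGen A.Step c .accept := by
  refine ⟨fun h => ?_, fun h => h.lift (Conf.map f) fun _ _ => hf.step_map⟩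
  generalize hd : c.map f = d at h
  induction h using Relation.ReflTransGen.head_induction_on generalizing c with
  | refl => rcases c with ⟨⟩ | ⟨⟩ | ⟨⟩ <;> cases hd; exact .refl
  | head hstep _ ih =>
    subst hd
    obtain ⟨c', rfl, hs⟩ := hf.exists_step_of_step_map hstep
    exact .head hs (ih c' rfl)

end IsCopy

variable {Q₁ Q₂ : Type}

def sum (A₁ : RNFAwtw α Q₁) (A₂ : RNFAwtw α Q₂) : RNFAwtw α (Q₁ ⊕ Q₂) where
  init := Sum.elim A₁.init A₂.init
  tl := Sum.elim A₁.tl A₂.tl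
  delta := Sum.elim (fun q a => Sum.inl '' A₁.delta q a) (fun q a => Sum.inr '' A₂.delta q a)
  endB := Sum.elim (fun q => (A₁.endB q).map Sum.inl) (fun q => (A₂.endB q).map Sum.inr)
  tl_fin := Sum.rec A₁.tl_fin A₂.tl_fin
  code_ne := Sum.rec A₁.code_ne A₂.code_ne
  prefix_code := by
    rintro (q | q) <;> simp only [Sum.elim_inl, Sum.elim_inr, Set.image_nonempty]
    exacts [A₁.prefix_code q, A₂.prefix_code q]
  tl_head := by
    rintro (q | q) <;> simp only [Sum.elim_inl, Sum.elim_inr, Set.image_nonempty]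
    exacts [A₁.tl_head q, A₂.tl_head q]

theorem isCopy_inl_sum (A₁ : RNFAwtw α Q₁) (A₂ : RNFAwtw α Q₂) :
    IsCopy Sum.inl A₁ (A₁.sum A₂) :=
  ⟨fun _ => rfl, fun _ _ => rfl, fun _ => rfl⟩

theorem isCopy_inr_sum (A₁ : RNFAwtw α Q₁) (A₂ : RNFAwtw α Q₂) :
    IsCopy Sum.inr A₂ (A₁.sum A₂) :=
  ⟨fun _ => rfl, fun _ _ => rfl, fun _ => rfl⟩

theorem lang_sum (A₁ : RNFAwtw α Q₁) (A₂ : RNFAwtw α Q₂) :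
    (A₁.sum A₂).lang = A₁.lang ∪ A₂.lang := by
  ext w
  simp only [lang, Accepts, Set.mem_ofPred_eq, Set.mem_union, Sum.exists]
  exact or_congr
    (exists_congr fun q => and_congr Iff.rfl
      ((isCopy_inl_sum A₁ A₂).reflTransGen_map_accept_iff (.state q w)))
    (exists_congr fun q => and_congr Iff.rfl
      ((isCopy_inr_sum A₁ A₂).reflTransGen_map_accept_iff (.state q w)))

end RNFAwtw

theorem RNFAwtw_closed_under_union_general {α : Type}
    (L₁ L₂ : Set (List α))
    (h₁ : AcceptedByRNFAwtw L₁) (h₂ : AcceptedByRNFAwtw L₂) :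
    AcceptedByRNFAwtw (L₁ ∪ L₂) := by
  obtain ⟨Q₁, _, A₁, rfl⟩ := h₁
  obtain ⟨Q₂, _, A₂, rfl⟩ := h₂
  exact ⟨Q₁ ⊕ Q₂, inferInstance, A₁.sum A₂, A₁.lang_sum A₂⟩

/-- The class of languages accepted by repetitive nondeterministic finite
automata with translucent words is closed under union. -/
theorem RNFAwtw_closed_under_union {α : Type} [Finite α]
    (L₁ L₂ : Set (List α))
    (h₁ : AcceptedByRNFAwtw L₁) (h₂ : AcceptedByRNFAwtw L₂) :
    AcceptedByRNFAwtw (L₁ ∪ L₂) :=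
  RNFAwtw_closed_under_union_general L₁ L₂ h₁ h₂
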